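/- arXiv:0811.1248 — 11 statements merged into one kernel-verified Lean document; each statement's English description precedes it below -/
import Mathlib

section
/- Let n ≥ 1 and let R(z), z ∈ ℂˣ, be a family of n²×n² complex matrices satisfying the Yang–Baxter equation R₁₂(xy⁻¹)·R₁₃(x)·R₂₃(y) = R₂₃(y)·R₁₃(x)·R₁₂(xy⁻¹) for all x,y ∈ ℂˣ, and the regularity property R(1) = P. Then R satisfies unitarity: there exists a function f : ℂˣ → ℂ with f(z) = f(z⁻¹) for all z, such that R₁₂(z)·R₂₁(z⁻¹) = f(z)·I for all z ∈ ℂˣ. -/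
open Matrix

noncomputable section

/-- The flip (permutation) matrix `P` on `ℂⁿ ⊗ ℂⁿ`, `P(v ⊗ w) = w ⊗ v`. -/
def flipN (n : ℕ) : Matrix (Fin n × Fin n) (Fin n × Fin n) ℂ :=
  fun p q => if p.1 = q.2 ∧ p.2 = q.1 then 1 else 0

/-- `A₁₂ = A ⊗ Iₙ` acting on the first two factors of `V ⊗ V ⊗ V`. -/
def op12 {n : ℕ} (A : Matrix (Fin n × Fin n) (Fin n × Fin n) ℂ) :
    Matrix (Fin n × Fin n × Fin n) (Fin n × Fin n × Fin n) ℂ :=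
  fun p q => A (p.1, p.2.1) (q.1, q.2.1) * (if p.2.2 = q.2.2 then 1 else 0)

/-- `A₂₃ = Iₙ ⊗ A` acting on the last two factors of `V ⊗ V ⊗ V`. -/
def op23 {n : ℕ} (A : Matrix (Fin n × Fin n) (Fin n × Fin n) ℂ) :
    Matrix (Fin n × Fin n × Fin n) (Fin n × Fin n × Fin n) ℂ :=
  fun p q => (if p.1 = q.1 then 1 else 0) * A (p.2.1, p.2.2) (q.2.1, q.2.2)

/-- `A₁₃ = P₂₃·A₁₂·P₂₃` acting on the first and third factors of `V ⊗ V ⊗ V`. -/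
def op13 {n : ℕ} (A : Matrix (Fin n × Fin n) (Fin n × Fin n) ℂ) :
    Matrix (Fin n × Fin n × Fin n) (Fin n × Fin n × Fin n) ℂ :=
  fun p q => A (p.1, p.2.2) (q.1, q.2.2) * (if p.2.1 = q.2.1 then 1 else 0)

lemma flip_mul_apply {n : ℕ} (A : Matrix (Fin n × Fin n) (Fin n × Fin n) ℂ)
    (p q : Fin n × Fin n) : (flipN n * A) p q = A (p.2, p.1) q := by
  simp [mul_apply, flipN, Fintype.sum_prod_type, ite_and]

lemma mul_flip_apply {n : ℕ} (A : Matrix (Fin n × Fin n) (Fin n × Fin n) ℂ)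
    (p q : Fin n × Fin n) : (A * flipN n) p q = A p (q.2, q.1) := by
  simp [mul_apply, flipN, Fintype.sum_prod_type, ite_and]

lemma flip_mul_flip (n : ℕ) :
    flipN n * flipN n = (1 : Matrix (Fin n × Fin n) (Fin n × Fin n) ℂ) := by
  ext p q
  rw [mul_flip_apply]
  simp [flipN, one_apply, Prod.ext_iff, and_comm]

lemma op12_mul {n : ℕ} (A B : Matrix (Fin n × Fin n) (Fin n × Fin n) ℂ) :
    op12 A * op12 B = op12 (A * B) := by
  ext p q
  simp [op12, mul_apply, Fintype.sum_prod_type, Finset.mul_sum, Finset.sum_mul,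
    mul_ite, ite_mul, mul_comm, mul_assoc, mul_left_comm]

lemma op13flip_mul_op23 {n : ℕ} (A : Matrix (Fin n × Fin n) (Fin n × Fin n) ℂ) :
    op13 (flipN n) * op23 A = op12 (flipN n * A * flipN n) * op13 (flipN n) := by
  ext p q
  rw [show flipN n * A * flipN n = flipN n * (A * flipN n) from mul_assoc _ _ _]
  simp only [op13, op23, op12, mul_apply, Fintype.sum_prod_type, flipN,
    flip_mul_apply, mul_flip_apply]
  simp [ite_and, mul_ite, ite_mul, Finset.sum_ite_eq, Finset.sum_ite_eq']

lemma op23_mul_op13flip {n : ℕ} (A : Matrix (Fin n × Fin n) (Fin n × Fin n) ℂ) :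
    op23 A * op13 (flipN n) = op13 (flipN n) * op12 (flipN n * A * flipN n) := by
  ext p q
  rw [show flipN n * A * flipN n = flipN n * (A * flipN n) from mul_assoc _ _ _]
  simp only [op13, op23, op12, mul_apply, Fintype.sum_prod_type, flipN,
    flip_mul_apply, mul_flip_apply]
  simp [ite_and, mul_ite, ite_mul, Finset.sum_ite_eq, Finset.sum_ite_eq']

lemma op12_mul_op13flip {n : ℕ} (B : Matrix (Fin n × Fin n) (Fin n × Fin n) ℂ) :
    op12 B * op13 (flipN n) = op13 (flipN n) * op23 (flipN n * B * flipN n) := by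
  ext p q
  rw [show flipN n * B * flipN n = flipN n * (B * flipN n) from mul_assoc _ _ _]
  simp only [op13, op23, op12, mul_apply, Fintype.sum_prod_type, flipN,
    flip_mul_apply, mul_flip_apply]
  simp [ite_and, mul_ite, ite_mul, Finset.sum_ite_eq, Finset.sum_ite_eq']

lemma op13flip_sq {n : ℕ} :
    op13 (flipN n) * op13 (flipN n)
      = (1 : Matrix (Fin n × Fin n × Fin n) (Fin n × Fin n × Fin n) ℂ) := by
  ext p q
  simp only [op13, mul_apply, Fintype.sum_prod_type, flipN, one_apply, Prod.ext_iff]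
  simp [ite_and, mul_ite, ite_mul, Finset.sum_ite_eq, Finset.sum_ite_eq']
  by_cases h1 : p.1 = q.1 <;> by_cases h2 : p.2.1 = q.2.1 <;> simp [h1, h2]

/-- Theorem 1 of the paper: an R-matrix satisfying the Yang–Baxter
equation and regularity `R(1) = P` automatically satisfies unitarity
`R₁₂(z)·R₂₁(z⁻¹) = f(z)·I` with `f(z) = f(z⁻¹)`. -/
theorem regularity_implies_unitarity (n : ℕ) (hn : 1 ≤ n)
    (R : ℂˣ → Matrix (Fin n × Fin n) (Fin n × Fin n) ℂ)
    (hYB : ∀ x y : ℂˣ,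
      op12 (R (x * y⁻¹)) * op13 (R x) * op23 (R y)
        = op23 (R y) * op13 (R x) * op12 (R (x * y⁻¹)))
    (hreg : R 1 = flipN n) :
    ∃ f : ℂˣ → ℂ, (∀ z : ℂˣ, f z = f z⁻¹) ∧
      ∀ z : ℂˣ,
        R z * (flipN n * R z⁻¹ * flipN n)
          = f z • (1 : Matrix (Fin n × Fin n) (Fin n × Fin n) ℂ) := by
  set G : ℂˣ → Matrix (Fin n × Fin n) (Fin n × Fin n) ℂ :=
    fun z => R z * (flipN n * R z⁻¹ * flipN n) with hG
  -- the key identity: op12 (G z⁻¹) = op23 (G z)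
  have key : ∀ z : ℂˣ, op12 (G z⁻¹) = op23 (G z) := by
    intro z
    have h := hYB 1 z
    rw [one_mul, hreg] at h
    have s1 : op12 (R z⁻¹) * op13 (flipN n) * op23 (R z)
        = op12 (R z⁻¹ * (flipN n * R z * flipN n)) * op13 (flipN n) := by
      rw [mul_assoc, op13flip_mul_op23, ← mul_assoc (op12 (R z⁻¹)), op12_mul]
    have s2 : op23 (R z) * op13 (flipN n) * op12 (R z⁻¹)
        = op13 (flipN n) * op12 ((flipN n * R z * flipN n) * R z⁻¹) := by
      rw [op23_mul_op13flip, mul_assoc, op12_mul]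
    have s3 : op12 (R z⁻¹ * (flipN n * R z * flipN n)) * op13 (flipN n)
        = op13 (flipN n) * op12 ((flipN n * R z * flipN n) * R z⁻¹) := by
      rw [← s1, h, s2]
    have s4 : op12 (R z⁻¹ * (flipN n * R z * flipN n))
        = op23 (flipN n * ((flipN n * R z * flipN n) * R z⁻¹) * flipN n) := by
      calc op12 (R z⁻¹ * (flipN n * R z * flipN n))
          = op12 (R z⁻¹ * (flipN n * R z * flipN n))
              * (op13 (flipN n) * op13 (flipN n)) := by rw [op13flip_sq, mul_one]
        _ = (op12 (R z⁻¹ * (flipN n * R z * flipN n)) * op13 (flipN n))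
              * op13 (flipN n) := (mul_assoc _ _ _).symm
        _ = (op13 (flipN n) * op12 ((flipN n * R z * flipN n) * R z⁻¹))
              * op13 (flipN n) := by rw [s3]
        _ = op13 (flipN n)
              * (op12 ((flipN n * R z * flipN n) * R z⁻¹) * op13 (flipN n)) :=
            mul_assoc _ _ _
        _ = op13 (flipN n) * (op13 (flipN n)
              * op23 (flipN n * ((flipN n * R z * flipN n) * R z⁻¹) * flipN n)) := by
            rw [op12_mul_op13flip]
        _ = (op13 (flipN n) * op13 (flipN n))
              * op23 (flipN n * ((flipN n * R z * flipN n) * R z⁻¹) * flipN n) :=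
            (mul_assoc _ _ _).symm
        _ = op23 (flipN n * ((flipN n * R z * flipN n) * R z⁻¹) * flipN n) := by
            rw [op13flip_sq, one_mul]
    have s5 : flipN n * ((flipN n * R z * flipN n) * R z⁻¹) * flipN n
        = R z * (flipN n * R z⁻¹ * flipN n) := by
      simp only [← mul_assoc]
      rw [flip_mul_flip, one_mul]
    have e1 : G z⁻¹ = R z⁻¹ * (flipN n * R z * flipN n) := by
      simp only [hG, inv_inv]
    rw [e1, hG, s4, s5]
  have keyE : ∀ z : ℂˣ, ∀ p q : Fin n × Fin n × Fin n,
      op12 (G z⁻¹) p q = op23 (G z) p q := by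
    intro z p q; rw [key z]
  set i0 : Fin n := ⟨0, hn⟩ with hi0
  have hz0 : ∀ (z : ℂˣ) (b b' c c' : Fin n),
      G z (b, c) (b', c') = G z⁻¹ (i0, b) (i0, b') * (if c = c' then 1 else 0) := by
    intro z b b' c c'
    have := keyE z (i0, b, c) (i0, b', c')
    simpa [op12, op23] using this.symm
  have hz1 : ∀ (z : ℂˣ) (a b a' b' : Fin n),
      G z (a, b) (a', b') = (if a = a' then 1 else 0) * G z⁻¹ (b, i0) (b', i0) := by
    intro z a b a' b'
    have := keyE z⁻¹ (a, b, i0) (a', b', i0)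
    rw [inv_inv] at this
    simpa [op12, op23] using this
  refine ⟨fun z => G z (i0, i0) (i0, i0), ?_, ?_⟩
  · intro z
    have := hz0 z i0 i0 i0 i0
    simpa using this
  · intro z
    show G z = _
    ext p q
    obtain ⟨b, c⟩ := p
    obtain ⟨b', c'⟩ := q
    rw [Matrix.smul_apply, Matrix.one_apply, smul_eq_mul]
    by_cases hcc : c = c'
    · by_cases hbb : b = b'
      · subst hcc; subst hbb
        simp only [Prod.mk.injEq, and_self, if_true, mul_one]
        have t1 := hz1 z b c b c
        have t2 := hz0 z⁻¹ c c i0 i0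
        rw [inv_inv] at t2
        have t3 := hz0 z i0 i0 c c
        have t4 := hz0 z i0 i0 i0 i0
        simp only [eq_self_iff_true, if_true, one_mul, mul_one] at t1 t2 t3 t4
        rw [t1, t2, t3, ← t4]
      · have t1 := hz1 z b c b' c'
        rw [if_neg hbb, zero_mul] at t1
        rw [t1, if_neg (by simp [Prod.ext_iff, hbb]), mul_zero]
    · have t1 := hz0 z b b' c c'
      rw [if_neg hcc, mul_zero] at t1
      rw [t1, if_neg (by simp [Prod.ext_iff, hcc]), mul_zero]
end
end

section
/- For any z₀ ∈ ℂ, the matrix identity K₂(y)·Ř·K₂(z₀)·Ř = Ř·K₂(z₀)·Ř·K₂(y) holds for all y ∈ ℂ if and only if h satisfies condition (★) at z₀, i.e. h_{i,j}(z₀)·h_{k,l}(y) = h_{i,j+k+2l}(z₀)·h_{2i+2k,2i+2l}(y) for all i,j,k,l ∈ ℤ/3ℤ and all y ∈ ℂ. -/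
open Matrix Kronecker

noncomputable section

abbrev Idx9 := Fin 3 × Fin 3

def flipP : Matrix Idx9 Idx9 ℂ := fun p q => if p.1 = q.2 ∧ p.2 = q.1 then 1 else 0

def RD3 (z : ℂ) : Matrix Idx9 Idx9 ℂ := fun p q =>
  let pf := z * (z - 1) / (z ^ 2 - z + 1)
  let qf := z / (z ^ 2 - z + 1)
  let rf := (1 - z) / (z ^ 2 - z + 1)
  match p, q with
  | (0,0), (0,0) => 1
  | (1,1), (1,1) => 1
  | (2,2), (2,2) => 1
  | (0,1), (0,2) => pf
  | (0,2), (0,1) => pf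
  | (1,0), (1,2) => pf
  | (1,2), (1,0) => pf
  | (2,0), (2,1) => pf
  | (2,1), (2,0) => pf
  | (0,1), (1,0) => qf
  | (0,2), (2,0) => qf
  | (1,0), (0,1) => qf
  | (1,2), (2,1) => qf
  | (2,0), (0,2) => qf
  | (2,1), (1,2) => qf
  | (0,1), (2,1) => rf
  | (0,2), (1,2) => rf
  | (1,0), (2,0) => rf
  | (1,2), (0,2) => rf
  | (2,0), (1,0) => rf
  | (2,1), (0,1) => rf
  | _, _ => 0

def MD3 (z : ℂ) : Matrix Idx9 Idx9 ℂ := fun p q =>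
  match p, q with
  | (0,0), (0,0) => z ^ 2 + 1
  | (1,1), (1,1) => z ^ 2 + 1
  | (2,2), (2,2) => z ^ 2 + 1
  | (0,0), (1,1) => z
  | (0,0), (2,2) => z
  | (1,1), (0,0) => z
  | (1,1), (2,2) => z
  | (2,2), (0,0) => z
  | (2,2), (1,1) => z
  | (0,1), (0,2) => 1
  | (0,2), (0,1) => 1
  | (1,0), (1,2) => 1
  | (1,2), (1,0) => 1
  | (2,0), (2,1) => 1
  | (2,1), (2,0) => 1
  | (0,1), (1,0) => -z
  | (0,2), (2,0) => -z
  | (1,0), (0,1) => -z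
  | (1,2), (2,1) => -z
  | (2,0), (0,2) => -z
  | (2,1), (1,2) => -z
  | (0,1), (2,1) => z ^ 2
  | (0,2), (1,2) => z ^ 2
  | (1,0), (2,0) => z ^ 2
  | (1,2), (0,2) => z ^ 2
  | (2,0), (1,0) => z ^ 2
  | (2,1), (0,1) => z ^ 2
  | _, _ => 0

def curlR (z : ℂ) : Matrix Idx9 Idx9 ℂ :=
  ((z ^ 2 - z + 1) / ((z - 1) * (z ^ 3 - 1))) • MD3 z

def pt1 (A : Matrix Idx9 Idx9 ℂ) : Matrix Idx9 Idx9 ℂ :=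
  fun p q => A (q.1, p.2) (p.1, q.2)

/-- The reflection equation (RE−). -/
def REminus (K : ℂ → Matrix (Fin 3) (Fin 3) ℂ) : Prop :=
  ∀ x y : ℂ, x ≠ 0 → y ≠ 0 →
    (x * y⁻¹) ^ 2 - x * y⁻¹ + 1 ≠ 0 → (x * y) ^ 2 - x * y + 1 ≠ 0 →
    RD3 (x * y⁻¹) * (K x ⊗ₖ (1 : Matrix (Fin 3) (Fin 3) ℂ)) *
        (flipP * RD3 (x * y) * flipP) * ((1 : Matrix (Fin 3) (Fin 3) ℂ) ⊗ₖ K y)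
      = ((1 : Matrix (Fin 3) (Fin 3) ℂ) ⊗ₖ K y) * RD3 (x * y) *
          (K x ⊗ₖ (1 : Matrix (Fin 3) (Fin 3) ℂ)) * (flipP * RD3 (x * y⁻¹) * flipP)

/-- The dual reflection equation (RE+). -/
def REplus (K : ℂ → Matrix (Fin 3) (Fin 3) ℂ) : Prop :=
  ∀ x y : ℂ, x ≠ 0 → y ≠ 0 →
    (y * x⁻¹) ^ 2 - y * x⁻¹ + 1 ≠ 0 → (x * y) ^ 3 ≠ 1 →
    RD3 (y * x⁻¹) * (K x ⊗ₖ (1 : Matrix (Fin 3) (Fin 3) ℂ)) *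
        (flipP * curlR (x * y) * flipP) * ((1 : Matrix (Fin 3) (Fin 3) ℂ) ⊗ₖ K y)
      = ((1 : Matrix (Fin 3) (Fin 3) ℂ) ⊗ₖ K y) * curlR (x * y) *
          (K x ⊗ₖ (1 : Matrix (Fin 3) (Fin 3) ℂ)) * (flipP * RD3 (y * x⁻¹) * flipP)

def StarCond (h : ZMod 3 → ZMod 3 → ℂ → ℂ) (z₀ : ℂ) : Prop :=
  ∀ (i j k l : ZMod 3) (y : ℂ),
    h i j z₀ * h k l y = h i (j + k + 2 * l) z₀ * h (2 * i + 2 * k) (2 * i + 2 * l) y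

def NonDiag (h : ZMod 3 → ZMod 3 → ℂ → ℂ) : Prop :=
  ∃ (i j : ZMod 3) (y : ℂ), i ≠ j ∧ h i j y ≠ 0

def Kof (h : ZMod 3 → ZMod 3 → ℂ → ℂ) (z : ℂ) : Matrix (Fin 3) (Fin 3) ℂ :=
  fun a b => h (((a : ℕ) : ZMod 3) + 1) (((b : ℕ) : ZMod 3) + 1) z

/-
At `z = 0` both `R₀` and the flip `P` are permutation matrices, so `Ř = P R₀` is the permutation
matrix of `(a, b) ↦ (-(a + b), a)` on `(ℤ/3)²`. Sandwiching the block-diagonal matrices `I ⊗ K`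
between copies of `Ř` only permutes entries, so each entry of either side of the reflection
equation is a single product of an entry of `K(z₀)` and an entry of `K(y)`. Matching the two sides
entrywise, after an invertible affine change of the four indices over `ℤ/3`, is exactly (★).
-/

/-- `R₀` fixes `e_a ⊗ e_a` and replaces `a` in `e_a ⊗ e_b`, `a ≠ b`, by the third index
`-(a + b) = 2 * (a + b)` (0-based indices). -/
def rd3ZeroPerm : Equiv.Perm (Fin 3 × Fin 3) :=
  Function.Involutive.toPerm (fun p => (2 * (p.1 + p.2), p.2)) (fun p => by revert p; decide)

lemma flipP_eq_permMatrix : flipP = Equiv.Perm.permMatrix ℂ (Equiv.prodComm (Fin 3) (Fin 3)) := by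
  ext p q
  simp [flipP, PEquiv.toMatrix_apply, Prod.ext_iff, eq_comm, and_comm]

lemma RD3_zero_eq_permMatrix : RD3 0 = rd3ZeroPerm.permMatrix ℂ := by
  ext ⟨a, b⟩ ⟨c, d⟩
  simp only [RD3, zero_mul, sub_zero, ne_eq, OfNat.ofNat_ne_zero, not_false_eq_true,
    zero_pow, zero_add, div_one, PEquiv.toMatrix_apply, Equiv.toPEquiv_apply, Option.mem_def,
    Option.some.injEq]
  fin_cases a <;> fin_cases b <;> fin_cases c <;> fin_cases d <;> rfl

def rcheckPerm : Equiv.Perm (Fin 3 × Fin 3) := rd3ZeroPerm * Equiv.prodComm (Fin 3) (Fin 3)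

lemma rcheckPerm_apply (p : Fin 3 × Fin 3) : rcheckPerm p = (2 * (p.1 + p.2), p.1) := by
  show (2 * (p.2 + p.1), p.1) = _
  rw [add_comm]

lemma rcheckPerm_symm_apply (q : Fin 3 × Fin 3) : rcheckPerm.symm q = (q.2, 2 * (q.1 + q.2)) := by
  rw [Equiv.symm_apply_eq, rcheckPerm_apply]
  revert q
  decide

lemma flipP_mul_RD3_zero : flipP * RD3 0 = rcheckPerm.permMatrix ℂ := by
  rw [flipP_eq_permMatrix, RD3_zero_eq_permMatrix, rcheckPerm, Matrix.permMatrix_mul]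

lemma fin3_two_mul_add_eq_iff {a b c : Fin 3} : 2 * (a + b) = c ↔ b = 2 * (a + c) := by
  revert a b c; decide

section
variable {R : Type*} [Semiring R]

lemma one_kronecker_rcheck_one_kronecker_rcheck (K L : Matrix (Fin 3) (Fin 3) R) :
    (1 ⊗ₖ L) * rcheckPerm.permMatrix R * (1 ⊗ₖ K) * rcheckPerm.permMatrix R
      = Matrix.of fun p q => L p.2 (2 * (p.1 + q.2)) * K p.1 (2 * (q.1 + q.2)) := by
  ext p q
  simp only [PEquiv.mul_toMatrix_toPEquiv, Matrix.mul_apply, submatrix_apply, id_eq,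
    rcheckPerm_symm_apply, kroneckerMap_apply, Matrix.one_apply, ite_mul, one_mul, zero_mul,
    mul_ite, mul_zero, Fintype.sum_prod_type, Finset.sum_ite_irrel, Finset.sum_ite_eq,
    Finset.mem_univ, reduceIte, Finset.sum_const_zero, Finset.sum_ite_eq', PEquiv.toMatrix_apply,
    Equiv.toPEquiv_apply, rcheckPerm_apply, Option.mem_def, Option.some.injEq, Prod.ext_iff,
    fin3_two_mul_add_eq_iff, ite_and, mul_one, of_apply]
  rw [add_comm q.2, add_comm q.2]

lemma rcheck_one_kronecker_rcheck_one_kronecker (K L : Matrix (Fin 3) (Fin 3) R) :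
    rcheckPerm.permMatrix R * (1 ⊗ₖ K) * rcheckPerm.permMatrix R * (1 ⊗ₖ L)
      = Matrix.of fun p q => K p.1 (2 * (q.1 + 2 * (p.1 + p.2))) * L (2 * (p.1 + p.2)) q.2 := by
  ext p q
  simp only [PEquiv.toMatrix_toPEquiv_mul, PEquiv.mul_toMatrix_toPEquiv, submatrix_submatrix,
    CompTriple.comp_eq, Matrix.mul_apply, submatrix_apply, rcheckPerm_apply, rcheckPerm_symm_apply,
    kroneckerMap_apply, Matrix.one_apply, ite_mul, one_mul, zero_mul, mul_ite, mul_zero,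
    Fintype.sum_prod_type, Finset.sum_ite_irrel, Finset.sum_ite_eq, Finset.mem_univ, reduceIte,
    Finset.sum_const_zero, Finset.sum_ite_eq', of_apply]
end

lemma rcheck_reflection_iff {R : Type*} [CommSemiring R] (K L : Matrix (Fin 3) (Fin 3) R) :
    (1 ⊗ₖ L) * rcheckPerm.permMatrix R * (1 ⊗ₖ K) * rcheckPerm.permMatrix R
        = rcheckPerm.permMatrix R * (1 ⊗ₖ K) * rcheckPerm.permMatrix R * (1 ⊗ₖ L) ↔
      ∀ a b c d : Fin 3, K a b * L c d = K a (b + c + 2 * d) * L (2 * (a + c)) (2 * (a + d)) := by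
  rw [one_kronecker_rcheck_one_kronecker_rcheck, rcheck_one_kronecker_rcheck_one_kronecker,
    ← Matrix.ext_iff]
  simp only [of_apply, Prod.forall]
  -- The entry at `(p, q)` is the instance `(p.1, 2 * (q.1 + q.2), p.2, 2 * (p.1 + q.2))` of the
  -- right-hand side, and this change of indices is a bijection of `(Fin 3)⁴`.
  constructor
  · intro H a b c d
    have hidx : ∀ a b c d : Fin 3, 2 * (a + 2 * (a + d)) = d ∧
        2 * (2 * b + a + d + 2 * (a + d)) = b ∧
        2 * (2 * b + a + d + 2 * (a + c)) = b + c + 2 * d := by decide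
    obtain ⟨h₁, h₂, h₃⟩ := hidx a b c d
    simpa only [h₁, h₂, h₃, mul_comm (L _ _)] using H a c (2 * b + a + d) (2 * (a + d))
  · intro H a c u v
    have hidx : ∀ a c u v : Fin 3, 2 * (u + v) + c + 2 * (2 * (a + v)) = 2 * (u + 2 * (a + c)) ∧
        2 * (a + 2 * (a + v)) = v := by decide
    obtain ⟨h₁, h₂⟩ := hidx a c u v
    rw [mul_comm, H, h₁, h₂]

def kofIndex (a : Fin 3) : ZMod 3 := (a : ℕ) + 1

lemma Kof_apply (h : ZMod 3 → ZMod 3 → ℂ → ℂ) (z : ℂ) (a b : Fin 3) :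
    Kof h z a b = h (kofIndex a) (kofIndex b) z := rfl

lemma starCond_iff_forall_kof (h : ZMod 3 → ZMod 3 → ℂ → ℂ) (z₀ : ℂ) :
    StarCond h z₀ ↔ ∀ (y : ℂ) (a b c d : Fin 3), Kof h z₀ a b * Kof h y c d =
      Kof h z₀ a (b + c + 2 * d) * Kof h y (2 * (a + c)) (2 * (a + d)) := by
  -- Each index map of (★) has coefficients summing to `1` in `ZMod 3`, so it commutes with the
  -- shift `kofIndex`.
  have hsurj : Function.Surjective kofIndex := by decide
  have hadd : ∀ b c d : Fin 3,
      kofIndex (b + c + 2 * d) = kofIndex b + kofIndex c + 2 * kofIndex d := by decide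
  have hmul : ∀ a c : Fin 3, kofIndex (2 * (a + c)) = 2 * kofIndex a + 2 * kofIndex c := by decide
  simp only [StarCond, hsurj.forall, Kof_apply, hadd, hmul]
  exact ⟨fun H y a b c d => H a b c d y, fun H a b c d y => H y a b c d⟩

/-- the constant reflection equation with `Ř = P·R(0)` holds for all `y`
iff `h` satisfies condition (★) at `z₀`. -/
theorem statement_2 (h : ZMod 3 → ZMod 3 → ℂ → ℂ) (z₀ : ℂ) :
    (∀ y : ℂ,
        ((1 : Matrix (Fin 3) (Fin 3) ℂ) ⊗ₖ Kof h y) * (flipP * RD3 0) *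
            ((1 : Matrix (Fin 3) (Fin 3) ℂ) ⊗ₖ Kof h z₀) * (flipP * RD3 0)
          = (flipP * RD3 0) * ((1 : Matrix (Fin 3) (Fin 3) ℂ) ⊗ₖ Kof h z₀) *
              (flipP * RD3 0) * ((1 : Matrix (Fin 3) (Fin 3) ℂ) ⊗ₖ Kof h y))
      ↔ StarCond h z₀ := by
  rw [flipP_mul_RD3_zero, starCond_iff_forall_kof]
  exact forall_congr' fun y => rcheck_reflection_iff _ _
end
end

section
/- If h satisfies condition (★) at z₀ and h_{a,a}(z₀) = 0 for some a ∈ ℤ/3ℤ, then h_{a,j}(z₀) = 0 for all j ∈ ℤ/3ℤ. -/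
open Matrix Kronecker

noncomputable section

/-- Proposition 2 of the paper. -/
theorem statement_3 (h : ZMod 3 → ZMod 3 → ℂ → ℂ) (z₀ : ℂ)
    (hstar : StarCond h z₀) (a : ZMod 3) (ha : h a a z₀ = 0) :
    ∀ j : ZMod 3, h a j z₀ = 0 := by
  intro j
  have H := hstar a j a j z₀
  have h3j : (3 : ZMod 3) * j = 0 := by
    simp [show (3 : ZMod 3) = 0 from rfl]
  have h3a : (3 : ZMod 3) * a = 0 := by
    simp [show (3 : ZMod 3) = 0 from rfl]
  have e1 : j + a + 2 * j = a := by linear_combination h3j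
  have e2 : 2 * a + 2 * a = a := by linear_combination h3a
  rw [e1, e2, ha, zero_mul] at H
  exact mul_self_eq_zero.mp H
end
end

section
/- Suppose h satisfies condition (★) at z₀, h is non-diagonal, and h_{a,a}(z₀) ≠ 0 for some a ∈ ℤ/3ℤ. Then h_{a,a+1}(z₀) ≠ 0 and h_{a,a+2}(z₀) ≠ 0; moreover, setting α := h_{a,a+1}(z₀)/h_{a,a}(z₀), one has α³ = 1 and h_{a,a+2}(y) = α·h_{a,a+1}(y) for all y ∈ ℂ. -/
open Matrix Kronecker

noncomputable section

/-- Proposition 3 of the paper. -/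
theorem statement_5 (h : ZMod 3 → ZMod 3 → ℂ → ℂ) (z₀ : ℂ)
    (hstar : StarCond h z₀) (hnd : NonDiag h)
    (a : ZMod 3) (ha : h a a z₀ ≠ 0) :
    h a (a + 1) z₀ ≠ 0 ∧ h a (a + 2) z₀ ≠ 0 ∧
      (h a (a + 1) z₀ / h a a z₀) ^ 3 = 1 ∧
      ∀ y : ℂ, h a (a + 2) y = (h a (a + 1) z₀ / h a a z₀) * h a (a + 1) y := by
  obtain ⟨i, j, y₀, hij, hy₀⟩ := hnd
  -- index normalization lemmas in ZMod 3
  have n1 : ∀ a i j : ZMod 3, a + i + 2 * j = a + (i - j) := by decide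
  have n2 : ∀ a i j : ZMod 3, a + (2*a+2*i) + 2 * (2*a+2*j) = a - (i - j) := by decide
  have n3 : ∀ a i : ZMod 3, 2 * a + 2 * (2*a+2*i) = i := by decide
  have n4 : ∀ a : ZMod 3, a + a + 2 * (a + 2) = a + 1 := by decide
  have n5 : ∀ a : ZMod 3, 2 * a + 2 * a = a := by decide
  have n6 : ∀ a : ZMod 3, 2 * a + 2 * (a + 2) = a + 1 := by decide
  have n7 : ∀ a : ZMod 3, a + a + 2 * (a + 1) = a + 2 := by decide
  have n8 : ∀ a : ZMod 3, 2 * a + 2 * (a + 1) = a + 2 := by decide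
  have n9 : ∀ a : ZMod 3, a - 1 = a + 2 := by decide
  have n10 : ∀ a : ZMod 3, a - 2 = a + 1 := by decide
  have E1 := hstar a a i j y₀
  have E2 := hstar a a (2*a+2*i) (2*a+2*j) y₀
  rw [n2, n3, n3] at E2
  rw [n1] at E1
  -- P : h a a z₀ ^ 2 = h a (a+1) z₀ * h a (a+2) z₀
  have P : h a a z₀ ^ 2 = h a (a+1) z₀ * h a (a+2) z₀ := by
    have hd : ∀ u : ZMod 3, u ≠ 0 → u = 1 ∨ u = 2 := by decide
    rcases hd (i - j) (sub_ne_zero.mpr hij) with hu | hu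
    · rw [hu] at E1 E2; rw [n9] at E2
      exact mul_right_cancel₀ hy₀ (by linear_combination h a a z₀ * E1 + h a (a+1) z₀ * E2)
    · rw [hu] at E1 E2; rw [n10] at E2
      exact mul_right_cancel₀ hy₀ (by linear_combination h a a z₀ * E1 + h a (a+2) z₀ * E2)
  have Q := hstar a a a (a+2) z₀
  rw [n4, n5, n6] at Q
  have ha1 : h a (a+1) z₀ ≠ 0 := by
    intro h0
    exact pow_ne_zero 2 ha (by rw [P, h0, zero_mul])
  have ha2 : h a (a+2) z₀ ≠ 0 := by
    intro h0
    exact pow_ne_zero 2 ha (by rw [P, h0, mul_zero])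
  refine ⟨ha1, ha2, ?_, ?_⟩
  · rw [div_pow, div_eq_one_iff_eq (pow_ne_zero 3 ha)]
    linear_combination (-(h a (a+1) z₀)) * Q - h a a z₀ * P
  · intro y
    have R := hstar a a a (a+1) y
    rw [n7, n5, n8] at R
    rw [div_mul_eq_mul_div, eq_div_iff ha]
    exact mul_left_cancel₀ ha (by linear_combination (h a (a+2) y) * P - h a (a+1) z₀ * R)
end
end

section
/- Suppose h satisfies condition (★) at z₀, h is non-diagonal, and for some a ∈ ℤ/3ℤ both h_{a,a}(z₀) ≠ 0 and h_{a+1,a+1}(z₀) ≠ 0. Then h_{a+2,a+2}(z₀) ≠ 0. -/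
open Matrix Kronecker

noncomputable section

/-- Proposition 4 of the paper. -/
theorem statement_6 (h : ZMod 3 → ZMod 3 → ℂ → ℂ) (z₀ : ℂ)
    (hstar : StarCond h z₀) (hnd : NonDiag h)
    (a : ZMod 3) (ha : h a a z₀ ≠ 0) (ha1 : h (a + 1) (a + 1) z₀ ≠ 0) :
    h (a + 2) (a + 2) z₀ ≠ 0 := by
  obtain ⟨p, q, y, -, hpq⟩ := hnd
  have e1 := hstar (a+1) (a+1) p q y
  have h1 : h (a+1) ((a+1) + p + 2*q) z₀ ≠ 0 := by
    intro hz
    rw [hz, zero_mul] at e1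
    exact mul_ne_zero ha1 hpq e1
  have e2 := hstar (a+1) ((a+1) + p + 2*q) a a z₀
  have i1 : ((a+1) + p + 2*q) + a + 2*a = (a+1) + p + 2*q := by
    have h3 : (3 : ZMod 3) = 0 := rfl
    linear_combination a * h3
  have i2 : 2*(a+1) + 2*a = a + 2 := by
    have h3 : (3 : ZMod 3) = 0 := rfl
    linear_combination a * h3
  rw [i1, i2] at e2
  have := mul_left_cancel₀ h1 e2
  rw [← this]
  exact ha
end
end

section
/- Suppose h satisfies condition (★) at z₀, h is non-diagonal, h_{a,a}(z₀) ≠ 0 for every a ∈ ℤ/3ℤ, and h is normalized so that h_{1,1}(z₀) = 1. Then there exist α, β, γ ∈ ℂ with α³ = β³ = γ³ = 1 and αβγ = 1, and functions A, B : ℂ → ℂ with A(z₀) = B(z₀) = 1, such that for all z ∈ ℂ: h_{1,1}(z) = h_{2,2}(z) = h_{0,0}(z) = A(z), h_{1,2}(z) = α·B(z), h_{1,0}(z) = α²·B(z), h_{2,1}(z) = β²·B(z), h_{2,0}(z) = β·B(z), h_{0,1}(z) = γ·B(z), and h_{0,2}(z) = γ²·B(z). -/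
open Matrix Kronecker

noncomputable section

/-- Proposition 5 of the paper. -/
theorem statement_7 (h : ZMod 3 → ZMod 3 → ℂ → ℂ) (z₀ : ℂ)
    (hstar : StarCond h z₀) (hnd : NonDiag h)
    (hdiag : ∀ a : ZMod 3, h a a z₀ ≠ 0) (hnorm : h 1 1 z₀ = 1) :
    ∃ (α β γ : ℂ) (A B : ℂ → ℂ),
      α ^ 3 = 1 ∧ β ^ 3 = 1 ∧ γ ^ 3 = 1 ∧ α * β * γ = 1 ∧
      A z₀ = 1 ∧ B z₀ = 1 ∧
      ∀ z : ℂ,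
        h 1 1 z = A z ∧ h 2 2 z = A z ∧ h 0 0 z = A z ∧
        h 1 2 z = α * B z ∧ h 1 0 z = α ^ 2 * B z ∧
        h 2 1 z = β ^ 2 * B z ∧ h 2 0 z = β * B z ∧
        h 0 1 z = γ * B z ∧ h 0 2 z = γ ^ 2 * B z := by
  have key : ∀ (i j k l m n p : ZMod 3), j + k + 2 * l = m → 2 * i + 2 * k = n →
      2 * i + 2 * l = p → ∀ y : ℂ, h i j z₀ * h k l y = h i m z₀ * h n p y := by
    rintro i j k l m n p rfl rfl rfl y
    exact hstar i j k l y
  -- diagonal relations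
  have I1 : ∀ y, h 0 0 y = h 2 2 y := by
    intro y
    have e := key 1 1 0 0 1 2 2 (by decide) (by decide) (by decide) y
    rwa [hnorm, one_mul, one_mul] at e
  have I2 : ∀ y, h 1 1 y = h 0 0 y := by
    intro y
    exact mul_left_cancel₀ (hdiag 2)
      (key 2 2 1 1 2 0 0 (by decide) (by decide) (by decide) y)
  have g22 : h 2 2 z₀ = 1 := by rw [← I1, ← I2, hnorm]
  -- off-diagonal functional relations
  have J1 : ∀ y, h 1 2 y = h 1 0 z₀ * h 1 0 y := by
    intro y
    have e := key 1 1 1 2 0 1 0 (by decide) (by decide) (by decide) y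
    rwa [hnorm, one_mul] at e
  have J2 : ∀ y, h 1 0 y = h 1 2 z₀ * h 1 2 y := by
    intro y
    have e := key 1 1 1 0 2 1 2 (by decide) (by decide) (by decide) y
    rwa [hnorm, one_mul] at e
  have J3 : ∀ y, h 2 0 y = h 1 0 z₀ * h 0 2 y := by
    intro y
    have e := key 1 1 2 0 0 0 2 (by decide) (by decide) (by decide) y
    rwa [hnorm, one_mul] at e
  have J6 : ∀ y, h 2 1 y = h 1 2 z₀ * h 0 1 y := by
    intro y
    have e := key 1 1 2 1 2 0 1 (by decide) (by decide) (by decide) y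
    rwa [hnorm, one_mul] at e
  have K1 : ∀ y, h 0 2 y = h 2 0 z₀ * h 1 2 y := by
    intro y
    have e := key 2 2 0 2 0 1 2 (by decide) (by decide) (by decide) y
    rwa [g22, one_mul] at e
  have K2 : ∀ y, h 1 2 y = h 2 1 z₀ * h 0 2 y := by
    intro y
    have e := key 2 2 1 2 1 0 2 (by decide) (by decide) (by decide) y
    rwa [g22, one_mul] at e
  have K3 : ∀ y, h 0 1 y = h 2 1 z₀ * h 1 0 y := by
    intro y
    have e := key 2 2 0 1 1 1 0 (by decide) (by decide) (by decide) y
    rwa [g22, one_mul] at e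
  -- constant relations at z₀
  have S1 : h 1 2 z₀ ^ 2 = h 1 0 z₀ := by
    have e := key 1 2 1 2 1 1 0 (by decide) (by decide) (by decide) z₀
    rw [hnorm, one_mul] at e
    rw [sq, e]
  have S2 : h 2 0 z₀ ^ 2 = h 2 1 z₀ := by
    have e := key 2 0 2 0 2 2 1 (by decide) (by decide) (by decide) z₀
    rw [g22, one_mul] at e
    rw [sq, e]
  -- non-diagonal witness gives h 1 2 y₀ ≠ 0
  obtain ⟨i, j, y₀, hij, hne⟩ := hnd
  have N : h 1 2 y₀ ≠ 0 := by
    intro hz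
    apply hne
    have cases3 : ∀ x : ZMod 3, x = 0 ∨ x = 1 ∨ x = 2 := by decide
    rcases cases3 i with rfl | rfl | rfl <;> rcases cases3 j with rfl | rfl | rfl
    · exact absurd rfl hij
    · rw [K3 y₀, J2 y₀, hz, mul_zero, mul_zero]
    · rw [K1 y₀, hz, mul_zero]
    · rw [J2 y₀, hz, mul_zero]
    · exact absurd rfl hij
    · exact hz
    · rw [J3 y₀, K1 y₀, hz, mul_zero, mul_zero]
    · rw [J6 y₀, K3 y₀, J2 y₀, hz, mul_zero, mul_zero, mul_zero]
    · exact absurd rfl hij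
  -- products
  have P1 : h 1 0 z₀ * h 1 2 z₀ = 1 := by
    have e := J1 y₀
    rw [J2 y₀] at e
    have e2 : h 1 0 z₀ * h 1 2 z₀ * h 1 2 y₀ = 1 * h 1 2 y₀ := by linear_combination -e
    exact mul_right_cancel₀ N e2
  have P2 : h 2 0 z₀ * h 2 1 z₀ = 1 := by
    have e := K2 y₀
    rw [K1 y₀] at e
    have e2 : h 2 0 z₀ * h 2 1 z₀ * h 1 2 y₀ = 1 * h 1 2 y₀ := by linear_combination -e
    exact mul_right_cancel₀ N e2
  have ha3 : h 1 2 z₀ ^ 3 = 1 := by linear_combination h 1 2 z₀ * S1 + P1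
  have hb3 : h 2 0 z₀ ^ 3 = 1 := by linear_combination h 2 0 z₀ * S2 + P2
  refine ⟨h 1 2 z₀, h 2 0 z₀, h 1 2 z₀ ^ 2 * h 2 0 z₀ ^ 2, h 1 1,
    fun z => h 1 2 z₀ ^ 2 * h 1 2 z, ha3, hb3, ?_, ?_, hnorm, ?_, ?_⟩
  · linear_combination (h 2 0 z₀ ^ 6 * (h 1 2 z₀ ^ 3 + 1)) * ha3 +
      (h 2 0 z₀ ^ 3 + 1) * hb3
  · linear_combination (h 2 0 z₀ ^ 3) * ha3 + hb3
  · linear_combination ha3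
  intro z
  refine ⟨rfl, ?_, (I2 z).symm, ?_, ?_, ?_, ?_, ?_, ?_⟩
  · rw [I2 z, I1 z]
  · linear_combination (-(h 1 2 z)) * ha3
  · rw [J2 z]
    linear_combination (-(h 1 2 z₀ * h 1 2 z)) * ha3
  · rw [J6 z, K3 z, J2 z, ← S2]
    ring
  · rw [J3 z, K1 z, ← S1]
    ring
  · rw [K3 z, J2 z, ← S2]
    linear_combination (-(h 1 2 z₀ * h 2 0 z₀ ^ 2 * h 1 2 z)) * ha3
  · rw [K1 z]
    linear_combination (-(h 2 0 z₀ * h 1 2 z)) * (h 1 2 z₀ ^ 3 + 1) * ha3 +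
      (-(h 2 0 z₀ * h 1 2 z * h 1 2 z₀ ^ 6)) * hb3
end
end

section
/- Suppose h satisfies condition (★) at z₀, h is non-diagonal, h_{1,1}(z₀) = 1, and h_{2,2}(z₀) = h_{0,0}(z₀) = 0 (so z₀ has exactly one nonzero diagonal entry, placed in position (1,1) and scaled to 1). Then there exist α ∈ ℂ with α³ = 1 and functions A, B, C, D, E : ℂ → ℂ with A(z₀) = B(z₀) = 1 and C(z₀) = D(z₀) = E(z₀) = 0, such that for all z ∈ ℂ: h_{1,1}(z) = A(z), h_{1,2}(z) = α·B(z), h_{1,0}(z) = α²·B(z), h_{2,1}(z) = α·D(z), h_{2,2}(z) = C(z), h_{2,0}(z) = E(z), h_{0,1}(z) = D(z), h_{0,2}(z) = α·E(z), and h_{0,0}(z) = C(z). -/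
open Matrix Kronecker

noncomputable section

/-- Proposition 6 of the paper. -/
theorem statement_8 (h : ZMod 3 → ZMod 3 → ℂ → ℂ) (z₀ : ℂ)
    (hstar : StarCond h z₀) (hnd : NonDiag h)
    (h11 : h 1 1 z₀ = 1) (h22 : h 2 2 z₀ = 0) (h00 : h 0 0 z₀ = 0) :
    ∃ (α : ℂ) (A B C D E : ℂ → ℂ),
      α ^ 3 = 1 ∧ A z₀ = 1 ∧ B z₀ = 1 ∧ C z₀ = 0 ∧ D z₀ = 0 ∧ E z₀ = 0 ∧
      ∀ z : ℂ,
        h 1 1 z = A z ∧ h 1 2 z = α * B z ∧ h 1 0 z = α ^ 2 * B z ∧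
        h 2 1 z = α * D z ∧ h 2 2 z = C z ∧ h 2 0 z = E z ∧
        h 0 1 z = D z ∧ h 0 2 z = α * E z ∧ h 0 0 z = C z := by

  -- abbreviations
  set b := h 1 2 z₀ with hb
  set c := h 1 0 z₀ with hc
  -- functional equations from the star condition with i = j = 1
  have F1 : ∀ y, h 1 0 y = b * h 1 2 y := by
    intro y
    have H := hstar 1 1 1 0 y
    simp only [show ((1:ZMod 3)+1+2*0 : ZMod 3) = 2 from by decide,
      show ((2:ZMod 3)*1+2*1 : ZMod 3) = 1 from by decide,
      show ((2:ZMod 3)*1+2*0 : ZMod 3) = 2 from by decide, h11, one_mul] at H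
    exact H
  have F2 : ∀ y, h 1 2 y = c * h 1 0 y := by
    intro y
    have H := hstar 1 1 1 2 y
    simp only [show ((1:ZMod 3)+1+2*2 : ZMod 3) = 0 from by decide,
      show ((2:ZMod 3)*1+2*1 : ZMod 3) = 1 from by decide,
      show ((2:ZMod 3)*1+2*2 : ZMod 3) = 0 from by decide, h11, one_mul] at H
    exact H
  have F3 : ∀ y, h 2 2 y = h 0 0 y := by
    intro y
    have H := hstar 1 1 2 2 y
    simp only [show ((1:ZMod 3)+2+2*2 : ZMod 3) = 1 from by decide,
      show ((2:ZMod 3)*1+2*2 : ZMod 3) = 0 from by decide, h11, one_mul] at H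
    exact H
  have F4 : ∀ y, h 2 1 y = b * h 0 1 y := by
    intro y
    have H := hstar 1 1 2 1 y
    simp only [show ((1:ZMod 3)+2+2*1 : ZMod 3) = 2 from by decide,
      show ((2:ZMod 3)*1+2*2 : ZMod 3) = 0 from by decide,
      show ((2:ZMod 3)*1+2*1 : ZMod 3) = 1 from by decide, h11, one_mul] at H
    exact H
  have F5 : ∀ y, h 0 1 y = c * h 2 1 y := by
    intro y
    have H := hstar 1 1 0 1 y
    simp only [show ((1:ZMod 3)+0+2*1 : ZMod 3) = 0 from by decide,
      show ((2:ZMod 3)*1+2*0 : ZMod 3) = 2 from by decide,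
      show ((2:ZMod 3)*1+2*1 : ZMod 3) = 1 from by decide, h11, one_mul] at H
    exact H
  have F6 : ∀ y, h 0 2 y = b * h 2 0 y := by
    intro y
    have H := hstar 1 1 0 2 y
    simp only [show ((1:ZMod 3)+0+2*2 : ZMod 3) = 2 from by decide,
      show ((2:ZMod 3)*1+2*0 : ZMod 3) = 2 from by decide,
      show ((2:ZMod 3)*1+2*2 : ZMod 3) = 0 from by decide, h11, one_mul] at H
    exact H
  have F7 : ∀ y, h 2 0 y = c * h 0 2 y := by
    intro y
    have H := hstar 1 1 2 0 y
    simp only [show ((1:ZMod 3)+2+2*0 : ZMod 3) = 0 from by decide,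
      show ((2:ZMod 3)*1+2*2 : ZMod 3) = 0 from by decide,
      show ((2:ZMod 3)*1+2*0 : ZMod 3) = 2 from by decide, h11, one_mul] at H
    exact H
  -- vanishing of h 0 1 and h 2 0 at z₀
  have Z1 : h 0 1 z₀ = 0 := by
    have H := hstar 0 0 0 2 z₀
    simp only [show ((0:ZMod 3)+0+2*2 : ZMod 3) = 1 from by decide,
      show ((2:ZMod 3)*0+2*0 : ZMod 3) = 0 from by decide,
      show ((2:ZMod 3)*0+2*2 : ZMod 3) = 1 from by decide, h00, zero_mul] at H
    exact (mul_self_eq_zero.mp H.symm)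
  have Z2 : h 2 0 z₀ = 0 := by
    have H := hstar 2 2 2 1 z₀
    simp only [show ((2:ZMod 3)+2+2*1 : ZMod 3) = 0 from by decide,
      show ((2:ZMod 3)*2+2*2 : ZMod 3) = 2 from by decide,
      show ((2:ZMod 3)*2+2*1 : ZMod 3) = 0 from by decide, h22, zero_mul] at H
    exact (mul_self_eq_zero.mp H.symm)
  -- relations between b and c
  have hcb : c = b * b := by simpa [hb, hc] using F1 z₀
  have hbc : b = c * c := by simpa [hb, hc] using F2 z₀
  -- b ≠ 0, else h is diagonal
  have hbne : b ≠ 0 := by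
    intro hb0
    have hc0 : c = 0 := by rw [hcb, hb0, mul_zero]
    obtain ⟨i, j, y, hij, hne⟩ := hnd
    apply hne
    have h12z : h 1 2 y = 0 := by rw [F2 y, hc0, zero_mul]
    have h10z : h 1 0 y = 0 := by rw [F1 y, hb0, zero_mul]
    have h21z : h 2 1 y = 0 := by
      have h01z : h 0 1 y = 0 := by rw [F5 y, hc0, zero_mul]
      rw [F4 y, h01z, mul_zero]
    have h01z : h 0 1 y = 0 := by rw [F5 y, hc0, zero_mul]
    have h20z : h 2 0 y = 0 := by rw [F7 y, hc0, zero_mul]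
    have h02z : h 0 2 y = 0 := by
      rw [F6 y, hb0, zero_mul]
    have key : ∀ i' j' : ZMod 3, i' ≠ j' →
        (i' = 0 ∧ j' = 1) ∨ (i' = 0 ∧ j' = 2) ∨ (i' = 1 ∧ j' = 0) ∨ (i' = 1 ∧ j' = 2) ∨
        (i' = 2 ∧ j' = 0) ∨ (i' = 2 ∧ j' = 1) := by decide
    rcases key i j hij with ⟨hi, hj⟩ | ⟨hi, hj⟩ | ⟨hi, hj⟩ | ⟨hi, hj⟩ | ⟨hi, hj⟩ | ⟨hi, hj⟩ <;>
      subst hi <;> subst hj <;> assumption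
  have hb4 : b = b ^ 4 := by
    calc b = c * c := hbc
      _ = (b * b) * (b * b) := by rw [hcb]
      _ = b ^ 4 := by ring
  have hb3 : b ^ 3 = 1 := by
    apply mul_left_cancel₀ hbne
    calc b * b ^ 3 = b ^ 4 := by ring
      _ = b := hb4.symm
      _ = b * 1 := (mul_one b).symm
  refine ⟨b, h 1 1, fun z => b ^ 2 * h 1 2 z, h 2 2, h 0 1, h 2 0,
    hb3, h11, ?_, h22, Z1, Z2, ?_⟩
  · show b ^ 2 * h 1 2 z₀ = 1
    calc b ^ 2 * h 1 2 z₀ = b ^ 2 * b := by rw [← hb]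
      _ = b ^ 3 := by ring
      _ = 1 := hb3
  · intro z
    refine ⟨rfl, ?_, ?_, (F4 z), rfl, rfl, rfl, (F6 z), (F3 z).symm⟩
    · calc h 1 2 z = b ^ 3 * h 1 2 z := by rw [hb3, one_mul]
        _ = b * (b ^ 2 * h 1 2 z) := by ring
    · calc h 1 0 z = b * h 1 2 z := F1 z
        _ = b ^ 4 * h 1 2 z := by rw [← hb4]
        _ = b ^ 2 * (b ^ 2 * h 1 2 z) := by ring
end
end

section
/- Suppose α, β, γ ∈ ℂ satisfy α³ = β³ = γ³ = 1 and αβγ = 1, and A, B : ℂˣ → ℂ satisfy A(z) → 1 and B(z) → 1 as |z| → ∞, and the family of 3×3 matrices K(z) with rows (A(z), αB(z), α²B(z)), (β²B(z), A(z), βB(z)), (γB(z), γ²B(z), A(z)) satisfies the reflection equation (RE−). Then there exist a primitive cube root of unity w and b ∈ ℂ such that β = wα, γ = w²α, and (1−z²)·A(z) = (w²+bz−z²)·B(z) for all z ∈ ℂˣ. -/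
/-!
Write `β = w α` and `γ = w² α`. With `defect z := (1 - z²) A z - (w² - z²) B z`, the
`((0,0),(0,1))` entry of (RE−) reads
`y (1 - x²) (defect x · y B y - defect y · x B x) + (1 + w + w²) x y (x - y)² B x B y = 0`.
The bracket is antisymmetric in `(x, y)` and the last term symmetric, so combining the relations at
`(x, y)` and `(y, x)` for two large reals where `B ≠ 0` forces `1 + w + w² = 0`: `w` is a primitive
cube root of unity. After that the vectors `(z B z, defect z)` are pairwise proportional; since `B`
does not vanish on a real ray, `defect z = b · z B z` for one constant `b`, which is the claimed
identity.
-/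

open Matrix Kronecker

noncomputable section

lemma ofReal_sq_sub_self_add_one_ne_zero (u : ℝ) : (u : ℂ) ^ 2 - u + 1 ≠ 0 := by
  have h : u ^ 2 - u + 1 ≠ 0 := by nlinarith [sq_nonneg (2 * u - 1)]
  exact_mod_cast h

lemma sq_sub_self_add_one_ne_zero_of_norm_ne_one {z : ℂ} (h : ‖z‖ ≠ 1) : z ^ 2 - z + 1 ≠ 0 := by
  intro hz
  have hcube : z ^ 3 = -1 := by linear_combination (z + 1) * hz
  refine h ((pow_eq_one_iff_of_nonneg (norm_nonneg z) three_ne_zero).1 ?_)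
  rw [← norm_pow, hcube, norm_neg, norm_one]

lemma exists_eq_mul_of_pow_three_eq_one {R : Type*} [CommRing R] {α β γ : R}
    (hα : α ^ 3 = 1) (hβ : β ^ 3 = 1) (hαβγ : α * β * γ = 1) :
    ∃ w : R, w ^ 3 = 1 ∧ β = w * α ∧ γ = w ^ 2 * α :=
  ⟨β * α ^ 2, by linear_combination α ^ 6 * hβ + (α ^ 3 + 1) * hα,
    by linear_combination -β * hα,
    by linear_combination (-γ - α ^ 2 * β ^ 2) * hα - γ * α ^ 3 * hβ + α ^ 2 * β ^ 2 * hαβγ⟩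

lemma flipP_mul_mul_flipP (M : Matrix Idx9 Idx9 ℂ) :
    flipP * M * flipP = M.submatrix Prod.swap Prod.swap := by
  ext p q
  simp [Matrix.mul_apply, flipP, Fintype.sum_prod_type, ite_and, Prod.swap]

def reflectionK (α β γ a b : ℂ) : Matrix (Fin 3) (Fin 3) ℂ :=
  !![a, α * b, α ^ 2 * b; β ^ 2 * b, a, β * b; γ * b, γ ^ 2 * b, a]

/-- In terms of `defect`, the identity `(1 - z²) A z = (w² + b z - z²) B z` reads
`defect w A B z = b * (z * B z)`. -/
def defect (w : ℂ) (A B : ℂ → ℂ) (z : ℂ) : ℂ := (1 - z ^ 2) * A z - (w ^ 2 - z ^ 2) * B z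

/-- The `((0,0),(0,1))` entry of (RE−), cleared of denominators. -/
def EntryRelation (w : ℂ) (A B : ℂ → ℂ) : Prop :=
  ∀ x y : ℂ, x ≠ 0 → y ≠ 0 → (x * y⁻¹) ^ 2 - x * y⁻¹ + 1 ≠ 0 → (x * y) ^ 2 - x * y + 1 ≠ 0 →
    y * (1 - x ^ 2) * (defect w A B x * (y * B y) - defect w A B y * (x * B x)) +
      (1 + w + w ^ 2) * (x * y * (x - y) ^ 2 * B x * B y) = 0

set_option maxHeartbeats 400000 in
theorem entryRelation_of_REminus {α w : ℂ} {A B : ℂ → ℂ} (hα : α ^ 3 = 1) (hw : w ^ 3 = 1)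
    (hre : REminus fun z => reflectionK α (w * α) (w ^ 2 * α) (A z) (B z)) :
    EntryRelation w A B := by
  intro x y hx hy h1 h2
  have h01 := congrFun (congrFun (hre x y hx hy h1 h2) (0, 0)) (0, 1)
  simp only [flipP_mul_mul_flipP, Matrix.mul_apply, Fintype.sum_prod_type, Fin.sum_univ_three,
    Matrix.submatrix_apply, Prod.swap, kroneckerMap_apply, Matrix.one_apply] at h01
  simp [RD3, reflectionK] at h01
  have h1' : x ^ 2 - x * y + y ^ 2 ≠ 0 := by
    contrapose! h1
    field_simp
    linear_combination h1
  have hd1 : x * y * (x * y - 1) + 1 ≠ 0 := by contrapose! h2; linear_combination h2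
  have hd2 : x * (x - y) + y ^ 2 ≠ 0 := by contrapose! h1'; linear_combination h1'
  field_simp at h01
  have hw4 : w ^ 4 = w := by linear_combination w * hw
  rw [hα, hw4] at h01
  have hα0 : α ≠ 0 := by rintro rfl; norm_num at hα
  refine (mul_eq_zero.1 (?_ : α * _ = 0)).resolve_left hα0
  unfold defect
  linear_combination h01

namespace EntryRelation

variable {w : ℂ} {A B : ℂ → ℂ}

theorem one_add_add_sq_eq_zero (h : EntryRelation w A B) {x y : ℝ} (hx : 1 < x) (hxy : x < y)
    (hBx : B x ≠ 0) (hBy : B y ≠ 0) : 1 + w + w ^ 2 = 0 := by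
  have hx0 : (x : ℂ) ≠ 0 := by exact_mod_cast (by linarith : x ≠ 0)
  have hy0 : (y : ℂ) ≠ 0 := by exact_mod_cast (by linarith : y ≠ 0)
  have hxy' := h x y hx0 hy0 (by exact_mod_cast ofReal_sq_sub_self_add_one_ne_zero (x * y⁻¹))
    (by exact_mod_cast ofReal_sq_sub_self_add_one_ne_zero (x * y))
  have hyx' := h y x hy0 hx0 (by exact_mod_cast ofReal_sq_sub_self_add_one_ne_zero (y * x⁻¹))
    (by exact_mod_cast ofReal_sq_sub_self_add_one_ne_zero (y * x))
  -- the antisymmetric `defect` terms cancel in this combination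
  have hprod : (1 + w + w ^ 2) *
      (((x * y * (x - y) ^ 2 * (x + y) * (1 - x * y) : ℝ) : ℂ) * (B x * B y)) = 0 := by
    push_cast
    linear_combination (x * (1 - y ^ 2) : ℂ) * hxy' + (y * (1 - x ^ 2) : ℂ) * hyx'
  refine (mul_eq_zero.1 hprod).resolve_right (mul_ne_zero ?_ (mul_ne_zero hBx hBy))
  have hpos : 0 < x * y * (x - y) ^ 2 * (x + y) :=
    mul_pos (mul_pos (by nlinarith) (by nlinarith)) (by linarith)
  exact_mod_cast (mul_neg_of_pos_of_neg hpos (by nlinarith)).ne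

theorem defect_mul_eq (h : EntryRelation w A B) (hw : 1 + w + w ^ 2 = 0) {x y : ℂ}
    (hx : x ≠ 0) (hy : y ≠ 0) (h1 : (x * y⁻¹) ^ 2 - x * y⁻¹ + 1 ≠ 0)
    (h2 : (x * y) ^ 2 - x * y + 1 ≠ 0) (hx1 : x ^ 2 ≠ 1) :
    defect w A B x * (y * B y) = defect w A B y * (x * B x) := by
  have hxy := h x y hx hy h1 h2
  rw [hw, zero_mul, add_zero] at hxy
  exact sub_eq_zero.1 ((mul_eq_zero.1 hxy).resolve_left (mul_ne_zero hy (sub_ne_zero.2 hx1.symm)))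

theorem exists_defect_eq_mul (h : EntryRelation w A B) (hw : 1 + w + w ^ 2 = 0) {r : ℝ}
    (hr : 1 < r) (hB : ∀ u : ℝ, r ≤ u → B u ≠ 0) :
    ∃ b : ℂ, ∀ z : ℂ, z ≠ 0 → defect w A B z = b * (z * B z) := by
  have hreal : ∀ u : ℝ, r ≤ u → defect w A B u * (r * B r) = defect w A B r * (u * B u) := by
    intro u hu
    exact h.defect_mul_eq hw (by exact_mod_cast (by linarith : u ≠ 0))
      (by exact_mod_cast (by linarith : r ≠ 0))
      (by exact_mod_cast ofReal_sq_sub_self_add_one_ne_zero (u * r⁻¹))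
      (by exact_mod_cast ofReal_sq_sub_self_add_one_ne_zero (u * r))
      (by exact_mod_cast (by nlinarith : u ^ 2 ≠ 1))
  have hrB : (r : ℂ) * B r ≠ 0 := mul_ne_zero (by exact_mod_cast (by linarith : r ≠ 0)) (hB r le_rfl)
  refine ⟨defect w A B r / (r * B r), fun z hz => ?_⟩
  have hz' : 0 < ‖z‖ := norm_pos_iff.2 hz
  -- `u / z` and `u z` must avoid the unit circle, where the roots of `t² - t + 1` lie
  set u : ℝ := r + ‖z‖ + ‖z‖⁻¹ with hu
  have hz_inv : 0 < ‖z‖⁻¹ := inv_pos.2 hz'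
  have hru : r ≤ u := by linarith
  have huz : ‖z‖ < u := by linarith
  have huz' : 1 < u * ‖z‖ := by
    rw [hu, add_mul, inv_mul_cancel₀ hz'.ne']
    nlinarith
  have hu0 : (u : ℂ) ≠ 0 := by exact_mod_cast (by linarith : u ≠ 0)
  have huz_eq := h.defect_mul_eq hw hu0 hz
    (sq_sub_self_add_one_ne_zero_of_norm_ne_one (by
      rw [norm_mul, norm_inv, Complex.norm_real, Real.norm_of_nonneg (by linarith)]
      exact (one_lt_div hz').2 huz |>.ne'))
    (sq_sub_self_add_one_ne_zero_of_norm_ne_one (by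
      rw [norm_mul, Complex.norm_real, Real.norm_of_nonneg (by linarith)]
      exact huz'.ne'))
    (by exact_mod_cast (by nlinarith : u ^ 2 ≠ 1))
  have huB : (u : ℂ) * B u ≠ 0 := mul_ne_zero hu0 (hB u hru)
  apply mul_left_cancel₀ huB
  rw [div_mul_eq_mul_div, mul_div_assoc', eq_div_iff hrB]
  linear_combination (r * B r : ℂ) * huz_eq.symm + (z * B z : ℂ) * hreal u hru

end EntryRelation

theorem statement_11_general (α β γ : ℂ)
    (hα : α ^ 3 = 1) (hβ : β ^ 3 = 1) (hαβγ : α * β * γ = 1)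
    (A B : ℂ → ℂ)
    (hB : Filter.Tendsto B (Bornology.cobounded ℂ) (nhds 1))
    (hre : REminus (fun z => !![A z, α * B z, α ^ 2 * B z;
                                β ^ 2 * B z, A z, β * B z;
                                γ * B z, γ ^ 2 * B z, A z])) :
    ∃ w b : ℂ, w ^ 3 = 1 ∧ w ≠ 1 ∧ β = w * α ∧ γ = w ^ 2 * α ∧
      ∀ z : ℂ, z ≠ 0 → (1 - z ^ 2) * A z = (w ^ 2 + b * z - z ^ 2) * B z := by
  obtain ⟨w, hw3, rfl, rfl⟩ := exists_eq_mul_of_pow_three_eq_one hα hβ hαβγ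
  have hrel : EntryRelation w A B := entryRelation_of_REminus hα hw3 hre
  obtain ⟨r, hr⟩ := Filter.eventually_atTop.1
    ((hB.comp (RCLike.tendsto_ofReal_atTop_cobounded ℂ)).eventually_ne one_ne_zero)
  have hBr : ∀ u : ℝ, max r 2 ≤ u → B u ≠ 0 := fun u hu => hr u (le_of_max_le_left hu)
  have hr2 : 2 ≤ max r 2 := le_max_right r 2
  have hw : 1 + w + w ^ 2 = 0 :=
    hrel.one_add_add_sq_eq_zero (by linarith) (lt_add_one _) (hBr _ le_rfl) (hBr _ (by linarith))
  obtain ⟨b, hb⟩ := hrel.exists_defect_eq_mul hw (by linarith) hBr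
  refine ⟨w, b, hw3, ?_, rfl, rfl, fun z hz => ?_⟩
  · rintro rfl
    norm_num at hw
  · have hbz := hb z hz
    rw [defect] at hbz
    linear_combination hbz

/-- from Proposition 9 of the paper. -/
theorem statement_11 (α β γ : ℂ)
    (hα : α ^ 3 = 1) (hβ : β ^ 3 = 1) (hγ : γ ^ 3 = 1) (hαβγ : α * β * γ = 1)
    (A B : ℂ → ℂ)
    (hA : Filter.Tendsto A (Bornology.cobounded ℂ) (nhds 1))
    (hB : Filter.Tendsto B (Bornology.cobounded ℂ) (nhds 1))
    (hre : REminus (fun z => !![A z, α * B z, α ^ 2 * B z;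
                                β ^ 2 * B z, A z, β * B z;
                                γ * B z, γ ^ 2 * B z, A z])) :
    ∃ w b : ℂ, w ^ 3 = 1 ∧ w ≠ 1 ∧ β = w * α ∧ γ = w ^ 2 * α ∧
      ∀ z : ℂ, z ≠ 0 → (1 - z ^ 2) * A z = (w ^ 2 + b * z - z ^ 2) * B z :=
  statement_11_general α β γ hα hβ hαβγ A B hB hre
end
end

section
/- The D(D₃) R-matrix does not satisfy crossing unitarity: there do not exist an invertible 3×3 complex matrix M, a nonzero λ ∈ ℂ, and a function f with f(z) ≠ 0 for all z, such that R₁₂(λz)^{t₁}·M₁·R₂₁(z⁻¹)^{t₁}·M₁⁻¹ = f(z)·I₉ (where M₁ = M⊗I₃) for all z ∈ ℂˣ with (λz)²−λz+1 ≠ 0 and (z⁻¹)²−z⁻¹+1 ≠ 0. -/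
open Matrix Kronecker

noncomputable section

/-! Multiplying the crossing relation on the right by `M ⊗ 1` turns it into
`pt1 R(λz) · (M ⊗ 1) · pt1 R₂₁(z⁻¹) = f(z) · (M ⊗ 1)`. The right-hand side vanishes at every entry
whose second tensor indices differ, while at three such entries the left-hand side collapses to the
single monomials `p(λz) p(z⁻¹) M₀₀`, `p(λz) r(z⁻¹) M₀₁` and `p(λz) r(z⁻¹) M₀₂`. For all but finitely
many `z` the coefficients `p(λz)` and `p(z⁻¹)` (hence `r(z⁻¹)`) are nonzero, so the first row of `M`
vanishes, which contradicts invertibility. -/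

lemma RD3_apply (z : ℂ) (a b c d : Fin 3) :
    RD3 z (a, b) (c, d) =
      if a = b then (if c = a ∧ d = a then 1 else 0)
      else if c = a ∧ d ≠ a ∧ d ≠ b then z * (z - 1) / (z ^ 2 - z + 1)
      else if c = b ∧ d = a then z / (z ^ 2 - z + 1)
      else if d = b ∧ c ≠ a ∧ c ≠ b then (1 - z) / (z ^ 2 - z + 1)
      else 0 := by
  fin_cases a <;> fin_cases b <;> fin_cases c <;> fin_cases d <;> rfl

lemma pt1_flipP_mul_mul_flipP_apply (A : Matrix Idx9 Idx9 ℂ) (p q : Idx9) :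
    pt1 (flipP * A * flipP) p q = A (p.2, q.1) (q.2, p.1) := by
  simp [pt1, Matrix.mul_apply, flipP, Fintype.sum_prod_type, ite_and]

lemma pt1_mul_mul_pt1_flipP_apply (A N B : Matrix Idx9 Idx9 ℂ) (p q : Idx9) :
    (pt1 A * N * pt1 (flipP * B * flipP)) p q =
      ∑ s : Idx9, ∑ r : Idx9, A (r.1, p.2) (p.1, r.2) * N r s * B (s.2, q.1) (q.2, s.1) := by
  simp only [Matrix.mul_apply, pt1_flipP_mul_mul_flipP_apply, Finset.sum_mul]
  rfl

lemma eq_smul_kronecker_one_of_mul_inv_kronecker_one_eq {m n R : Type*} [Fintype m]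
    [DecidableEq m] [Fintype n] [DecidableEq n] [CommRing R] {M : Matrix m m R} (hM : IsUnit M)
    {X : Matrix (m × n) (m × n) R} {c : R} (h : X * (M⁻¹ ⊗ₖ (1 : Matrix n n R)) = c • 1) :
    X = c • (M ⊗ₖ (1 : Matrix n n R)) := by
  calc X = X * (M⁻¹ ⊗ₖ (1 : Matrix n n R)) * (M ⊗ₖ (1 : Matrix n n R)) := by
        rw [Matrix.mul_assoc, ← Matrix.mul_kronecker_mul, Matrix.nonsing_inv_mul M
          ((Matrix.isUnit_iff_isUnit_det M).mp hM), Matrix.one_mul, Matrix.one_kronecker_one,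
          Matrix.mul_one]
    _ = c • (M ⊗ₖ (1 : Matrix n n R)) := by rw [h, Matrix.smul_mul, Matrix.one_mul]

lemma row_zero_of_crossing_eq_smul {M : Matrix (Fin 3) (Fin 3) ℂ} {w u c : ℂ}
    (hw : w * (w - 1) / (w ^ 2 - w + 1) ≠ 0) (hu : u * (u - 1) / (u ^ 2 - u + 1) ≠ 0)
    (E : pt1 (RD3 w) * (M ⊗ₖ (1 : Matrix (Fin 3) (Fin 3) ℂ)) * pt1 (flipP * RD3 u * flipP) =
      c • (M ⊗ₖ (1 : Matrix (Fin 3) (Fin 3) ℂ))) (j : Fin 3) :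
    M 0 j = 0 := by
  have entry (p q : Idx9) := (pt1_mul_mul_pt1_flipP_apply _ _ _ p q).symm.trans (congr_fun₂ E p q)
  have hr : (1 - u) / (u ^ 2 - u + 1) ≠ 0 := by
    obtain ⟨hnum, hden⟩ := div_ne_zero_iff.mp hu
    exact div_ne_zero (sub_ne_zero.mpr (Ne.symm (sub_ne_zero.mp (right_ne_zero_of_mul hnum)))) hden
  have e0 : w * (w - 1) / (w ^ 2 - w + 1) * M 0 0 * (u * (u - 1) / (u ^ 2 - u + 1)) = 0 := by
    simpa [Fintype.sum_prod_type, Fin.sum_univ_three, Matrix.one_apply, RD3_apply]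
      using entry (0, 1) (1, 2)
  have e1 : w * (w - 1) / (w ^ 2 - w + 1) * M 0 1 * ((1 - u) / (u ^ 2 - u + 1)) = 0 := by
    simpa [Fintype.sum_prod_type, Fin.sum_univ_three, Matrix.one_apply, RD3_apply]
      using entry (0, 1) (1, 0)
  have e2 : w * (w - 1) / (w ^ 2 - w + 1) * M 0 2 * ((1 - u) / (u ^ 2 - u + 1)) = 0 := by
    simpa [Fintype.sum_prod_type, Fin.sum_univ_three, Matrix.one_apply, RD3_apply]
      using entry (0, 2) (2, 0)
  fin_cases j
  · simpa [hw, hu] using e0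
  · simpa [hw, hr] using e1
  · simpa [hw, hr] using e2

lemma finite_setOf_mul_sub_one_div_eq_zero :
    {w : ℂ | w * (w - 1) / (w ^ 2 - w + 1) = 0}.Finite := by
  open Polynomial in
  let P : ℂ[X] := X * (X - 1) * (X ^ 2 - X + 1)
  have hP : P ≠ 0 := fun h => by
    have h2 := congr_arg (eval 2) h
    norm_num [P] at h2
  refine (finite_setOfPred_isRoot hP).subset fun w hw => ?_
  simp only [Set.mem_ofPred_eq, div_eq_zero_iff] at hw
  simp only [Set.mem_ofPred_eq, IsRoot, P, eval_mul, eval_sub, eval_add, eval_pow, eval_X, eval_one]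
  rcases hw with hw | hw <;> simp [hw]

lemma exists_mul_sub_one_div_ne_zero_at_mul_and_inv {lam : ℂ} (hlam : lam ≠ 0) :
    ∃ z : ℂ, (lam * z) * (lam * z - 1) / ((lam * z) ^ 2 - lam * z + 1) ≠ 0 ∧
      z⁻¹ * (z⁻¹ - 1) / ((z⁻¹) ^ 2 - z⁻¹ + 1) ≠ 0 := by
  have hfin := finite_setOf_mul_sub_one_div_eq_zero
  obtain ⟨z, hz⟩ := ((hfin.preimage (mul_right_injective₀ hlam).injOn).union
    (hfin.preimage inv_injective.injOn)).exists_notMem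
  exact ⟨z, not_or.mp hz⟩

/-- the `D(D₃)` R-matrix does not satisfy crossing unitarity. -/
theorem statement_17 :
    ¬ ∃ (M : Matrix (Fin 3) (Fin 3) ℂ) (lam : ℂ) (f : ℂ → ℂ),
        IsUnit M ∧ lam ≠ 0 ∧ (∀ z : ℂ, f z ≠ 0) ∧
        ∀ z : ℂ, z ≠ 0 → (lam * z) ^ 2 - lam * z + 1 ≠ 0 →
          (z⁻¹) ^ 2 - z⁻¹ + 1 ≠ 0 →
          pt1 (RD3 (lam * z)) * (M ⊗ₖ (1 : Matrix (Fin 3) (Fin 3) ℂ)) *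
              pt1 (flipP * RD3 z⁻¹ * flipP) * (M⁻¹ ⊗ₖ (1 : Matrix (Fin 3) (Fin 3) ℂ))
            = f z • (1 : Matrix Idx9 Idx9 ℂ) := by
  rintro ⟨M, lam, f, hM, hlam, -, h⟩
  obtain ⟨z, hw, hu⟩ := exists_mul_sub_one_div_ne_zero_at_mul_and_inv hlam
  have hz : z ≠ 0 := fun hz => hu (by simp [hz])
  have E := h z hz (div_ne_zero_iff.mp hw).2 (div_ne_zero_iff.mp hu).2
  have hrow := row_zero_of_crossing_eq_smul hw hu
    (eq_smul_kronecker_one_of_mul_inv_kronecker_one_eq hM E)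
  have hdet := (Matrix.isUnit_iff_isUnit_det M).mp hM
  rw [Matrix.det_eq_zero_of_row_eq_zero 0 hrow] at hdet
  exact not_isUnit_zero hdet
end
end

section
/- For all z ∈ ℂ with z²−z+1 ≠ 0 and z³ ≠ 1, one has 𝓡₁₂(z)^{t₁}·R₂₁(z)^{t₁} = I₉; equivalently, the explicit matrix 𝓡(z) equals [((R₂₁(z))^{t₁})⁻¹]^{t₁}. -/
open Matrix Kronecker

noncomputable section

/-! After clearing the denominator `z ^ 2 - z + 1` of `RD3 z`, both it and `MD3 z` lie in the
five-parameter family `dd3Matrix`. For two members of this family, the product of the partial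
transposes, the second one conjugated by the flip, is a scalar matrix as soon as five bilinear
relations between the parameters hold. For the two numerators these are polynomial identities in
`z` with scalar `(z - 1) * (z ^ 3 - 1)`, which the prefactor of `curlR z` cancels. A one-sided
inverse of a square matrix is two-sided and `pt1` is an involution, which gives the second
identity. -/

/-- `p`, `q`, `r` play the roles of the paper's `p(z)`, `q(z)`, `r(z)`. For `i ≠ j`, `-(i + j)` is
the third element of `Fin 3`, as `0 + 1 + 2 = 0`. -/
def dd3Matrix (d e p q r : ℂ) : Matrix Idx9 Idx9 ℂ := fun a b =>
  if a.1 = a.2 then (if b.1 = b.2 then (if a.1 = b.1 then d else e) else 0)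
  else if b = (a.1, -(a.1 + a.2)) then p
  else if b = a.swap then q
  else if b = (-(a.1 + a.2), a.2) then r
  else 0

lemma smul_dd3Matrix (t d e p q r : ℂ) :
    t • dd3Matrix d e p q r = dd3Matrix (t * d) (t * e) (t * p) (t * q) (t * r) := by
  ext a b
  simp only [Matrix.smul_apply, dd3Matrix, smul_eq_mul]
  split_ifs <;> simp

lemma MD3_eq_dd3Matrix (z : ℂ) : MD3 z = dd3Matrix (z ^ 2 + 1) z 1 (-z) (z ^ 2) := by
  ext ⟨i, j⟩ ⟨k, l⟩
  fin_cases i <;> fin_cases j <;> fin_cases k <;> fin_cases l <;> rfl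

lemma RD3_eq_smul_dd3Matrix (z : ℂ) (h : z ^ 2 - z + 1 ≠ 0) :
    RD3 z = (z ^ 2 - z + 1)⁻¹ • dd3Matrix (z ^ 2 - z + 1) 0 (z * (z - 1)) z (1 - z) := by
  rw [smul_dd3Matrix, inv_mul_cancel₀ h, mul_zero]
  simp only [← div_eq_inv_mul]
  ext ⟨i, j⟩ ⟨k, l⟩
  fin_cases i <;> fin_cases j <;> fin_cases k <;> fin_cases l <;> rfl

lemma flipP_eq_toMatrix_prodComm :
    flipP = (Equiv.prodComm (Fin 3) (Fin 3)).toPEquiv.toMatrix := by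
  ext ⟨i, j⟩ ⟨k, l⟩
  simp [flipP, PEquiv.toMatrix_apply, Prod.ext_iff, and_comm]

lemma flipP_mul_mul_flipP_apply (A : Matrix Idx9 Idx9 ℂ) (a b : Idx9) :
    (flipP * A * flipP) a b = A a.swap b.swap := by
  simp [flipP_eq_toMatrix_prodComm, PEquiv.toMatrix_toPEquiv_mul, PEquiv.mul_toMatrix_toPEquiv]

lemma pt1_apply (A : Matrix Idx9 Idx9 ℂ) (a b : Idx9) : pt1 A a b = A (b.1, a.2) (a.1, b.2) :=
  rfl

lemma pt1_smul (t : ℂ) (A : Matrix Idx9 Idx9 ℂ) : pt1 (t • A) = t • pt1 A :=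
  rfl

lemma pt1_pt1 (A : Matrix Idx9 Idx9 ℂ) : pt1 (pt1 A) = A :=
  rfl

lemma pt1_dd3Matrix_mul_pt1_flip_dd3Matrix {d e p q r d' e' p' q' r' s : ℂ}
    (hd : d * d' + 2 * q * q' = s) (hq : d * q' + q * d' + q * q' = 0)
    (he : e * e' + p * r' + r * p' = s) (hp : p * p' + e * r' + r * e' = 0)
    (hr : p * e' + e * p' + r * r' = 0) :
    pt1 (dd3Matrix d e p q r) * pt1 (flipP * dd3Matrix d' e' p' q' r' * flipP) = s • 1 := by
  ext ⟨i, j⟩ ⟨k, l⟩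
  rw [Matrix.mul_apply]
  simp only [pt1_apply, flipP_mul_mul_flipP_apply, Fintype.sum_prod_type, Fin.sum_univ_three,
    Matrix.smul_apply, Matrix.one_apply, smul_eq_mul]
  fin_cases i <;> fin_cases j <;> fin_cases k <;> fin_cases l <;>
    simp only [dd3Matrix, Prod.swap_prod_mk, Prod.mk.injEq, Fin.isValue, Fin.reduceEq, Fin.mk_one,
      Fin.zero_eta, Fin.reduceFinMk, zero_ne_one, one_ne_zero, ↓reduceIte, zero_add, mul_zero,
      zero_mul] <;>
    grind

lemma pt1_MD3_mul_pt1_flip_dd3Matrix (z : ℂ) :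
    pt1 (MD3 z) * pt1 (flipP * dd3Matrix (z ^ 2 - z + 1) 0 (z * (z - 1)) z (1 - z) * flipP)
      = ((z - 1) * (z ^ 3 - 1)) • 1 := by
  rw [MD3_eq_dd3Matrix]
  apply pt1_dd3Matrix_mul_pt1_flip_dd3Matrix <;> ring

lemma eq_pt1_inv_of_pt1_mul_pt1_eq_one {A B : Matrix Idx9 Idx9 ℂ} (h : pt1 A * pt1 B = 1) :
    A = pt1 (pt1 B)⁻¹ := by
  rw [Matrix.inv_eq_left_inv h, pt1_pt1]

/-- `𝓡₁₂(z)^{t₁}·R₂₁(z)^{t₁} = I₉`; equivalently the explicit matrix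
`𝓡(z)` equals `[((R₂₁(z))^{t₁})⁻¹]^{t₁}`. -/
theorem statement_18 (z : ℂ) (h1 : z ^ 2 - z + 1 ≠ 0) (h2 : z ^ 3 ≠ 1) :
    pt1 (curlR z) * pt1 (flipP * RD3 z * flipP) = (1 : Matrix Idx9 Idx9 ℂ) ∧
    curlR z = pt1 ((pt1 (flipP * RD3 z * flipP))⁻¹) := by
  have hz3 : z ^ 3 - 1 ≠ 0 := sub_ne_zero.mpr h2
  have hz1 : z - 1 ≠ 0 := fun h ↦ hz3 (by linear_combination (z ^ 2 + z + 1) * h)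
  have h : pt1 (curlR z) * pt1 (flipP * RD3 z * flipP) = 1 := by
    rw [curlR, RD3_eq_smul_dd3Matrix z h1]
    simp only [pt1_smul, Matrix.mul_smul, Matrix.smul_mul, smul_smul,
      pt1_MD3_mul_pt1_flip_dd3Matrix]
    rw [div_mul_cancel₀ _ (mul_ne_zero hz1 hz3), inv_mul_cancel₀ h1, one_smul]
  exact ⟨h, eq_pt1_inv_of_pt1_mul_pt1_eq_one h⟩
end
end

section
/- Let R′(1) denote the entrywise derivative of the D(D₃) R-matrix R(z) at z = 1, and let P be the 9×9 flip permutation matrix. Then i·P·R′(1) = Σ_{γ∈S₃} i·(E^{γ(1)}_{γ(2)} ⊗ E^{γ(2)}_{γ(3)} − E^{γ(2)}_{γ(3)} ⊗ E^{γ(1)}_{γ(2)}), where the sum runs over all six permutations γ of {1,2,3} and E^i_j denotes the 3×3 elementary matrix with 1 in row i, column j and 0 elsewhere. -/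
open Matrix Kronecker

noncomputable section

/-- The entrywise derivative of the `D(D₃)` R-matrix at `z = 1`. -/
def RD3deriv : Matrix Idx9 Idx9 ℂ :=
  fun p q => deriv (fun z : ℂ => RD3 z p q) 1

/-!
At `z = 1` the weights `p, q, r` have derivatives `1, 0, -1`, and the constant entries contribute
nothing, so `R′(1)` has entry `1` at `((x, y), (x, w))` and `-1` at `((x, y), (z, y))` whenever the
indices involved are distinct. Since a permutation of `Fin 3` is determined by its three values, the
`((a, b), (c, d))` entry of `∑ γ, E^{γ 0}_{γ 1} ⊗ E^{γ 1}_{γ 2}` is `1` exactly when `b = c` and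
`a, b, d` are distinct; the flip `P` matches the two descriptions.
-/

open Function Equiv

lemma hasDerivAt_div_denom_at_one {u : ℂ → ℂ} {u' : ℂ} (hu : HasDerivAt u u' 1) :
    HasDerivAt (fun z => u z / (z ^ 2 - z + 1)) (u' - u 1) 1 := by
  have hden : HasDerivAt (fun z : ℂ => z ^ 2 - z + 1) 1 1 :=
    (((hasDerivAt_pow 2 1).sub (hasDerivAt_id 1)).add_const 1).congr_deriv (by norm_num)
  exact (hu.fun_div hden (by norm_num)).congr_deriv (by norm_num)

lemma deriv_p_weight : deriv (fun z : ℂ => z * (z - 1) / (z ^ 2 - z + 1)) 1 = 1 := by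
  have hu : HasDerivAt (fun z : ℂ => z * (z - 1)) (1 * (1 - 1) + 1 * 1) 1 :=
    (hasDerivAt_id 1).mul ((hasDerivAt_id 1).sub_const 1)
  simpa using (hasDerivAt_div_denom_at_one hu).deriv

lemma deriv_q_weight : deriv (fun z : ℂ => z / (z ^ 2 - z + 1)) 1 = 0 := by
  simpa using (hasDerivAt_div_denom_at_one (hasDerivAt_id 1)).deriv

lemma deriv_r_weight : deriv (fun z : ℂ => (1 - z) / (z ^ 2 - z + 1)) 1 = -1 := by
  simpa using (hasDerivAt_div_denom_at_one ((hasDerivAt_id 1).const_sub 1)).deriv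

lemma RD3deriv_apply (a b c d : Fin 3) :
    RD3deriv (a, b) (c, d) =
      (if a = c ∧ Injective ![b, a, d] then 1 else 0)
        - (if b = d ∧ Injective ![a, b, c] then 1 else 0) := by
  fin_cases a <;> fin_cases b <;> fin_cases c <;> fin_cases d <;>
    (first
      | refine deriv_p_weight.trans ?_
      | refine deriv_q_weight.trans ?_
      | refine deriv_r_weight.trans ?_
      | refine (deriv_const 1 (1 : ℂ)).trans ?_
      | refine (deriv_const 1 (0 : ℂ)).trans ?_) <;>
    simp +decide

lemma flipP_mul_apply (M : Matrix Idx9 Idx9 ℂ) (a b : Fin 3) (q : Idx9) :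
    (flipP * M) (a, b) q = M (b, a) q := by
  simp [Matrix.mul_apply, flipP, Fintype.sum_prod_type, ite_and]

lemma sum_perm_ite_coe_eq {α R : Type*} [Fintype α] [DecidableEq α] [AddCommMonoidWithOne R]
    (v : α → α) : (∑ γ : Perm α, if ⇑γ = v then (1 : R) else 0) = if Injective v then 1 else 0 := by
  split_ifs with hv
  · let e := Equiv.ofBijective v (Finite.injective_iff_bijective.mp hv)
    simp_rw [show ∀ γ : Perm α, (⇑γ = v ↔ γ = e) from fun γ => by
      rw [Equiv.ext_iff, funext_iff]; rfl]
    simp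
  · refine Finset.sum_eq_zero fun γ _ => if_neg ?_
    rintro rfl
    exact hv γ.injective

lemma kronecker_apply_comm {R l m n p : Type*} [CommMagma R] (A : Matrix l m R) (B : Matrix n p R)
    (i : l) (j : n) (k : m) (k' : p) : (A ⊗ₖ B) (i, j) (k, k') = (B ⊗ₖ A) (j, i) (k', k) :=
  mul_comm _ _

lemma sum_perm_single_kronecker_single_apply {R : Type*} [Semiring R] (a b c d : Fin 3) :
    (∑ γ : Perm (Fin 3), single (γ 0) (γ 1) (1 : R) ⊗ₖ single (γ 1) (γ 2) (1 : R)) (a, b) (c, d)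
      = if b = c ∧ Injective ![a, b, d] then 1 else 0 := by
  have hchain : ∀ γ : Perm (Fin 3),
      ((γ 0, γ 1) = (a, b) ∧ (γ 1, γ 2) = (c, d)) ↔ b = c ∧ ⇑γ = ![a, b, d] := by
    intro γ
    simp only [Prod.mk.injEq, funext_iff, Fin.forall_fin_succ, cons_val_zero, cons_val_succ,
      Fin.succ_zero_eq_one, Fin.succ_one_eq_two, IsEmpty.forall_iff, and_true]
    grind
  simp_rw [Matrix.sum_apply, single_kronecker_single, single_apply, mul_one, hchain, ite_and,
    Finset.sum_ite_irrel, sum_perm_ite_coe_eq, Finset.sum_const_zero]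

/-- the local Hamiltonian `i·P·R′(1)` as a sum over permutations. -/
theorem statement_19 :
    Complex.I • (flipP * RD3deriv)
      = ∑ γ : Equiv.Perm (Fin 3),
          Complex.I •
            (Matrix.single (γ 0) (γ 1) (1 : ℂ) ⊗ₖ Matrix.single (γ 1) (γ 2) (1 : ℂ)
              - Matrix.single (γ 1) (γ 2) (1 : ℂ) ⊗ₖ Matrix.single (γ 0) (γ 1) (1 : ℂ)) := by
  rw [← Finset.smul_sum, Finset.sum_sub_distrib]
  congr 1
  ext ⟨a, b⟩ ⟨c, d⟩
  have hswap : (∑ γ : Perm (Fin 3), single (γ 1) (γ 2) (1 : ℂ) ⊗ₖ single (γ 0) (γ 1) (1 : ℂ))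
      (a, b) (c, d) =
      (∑ γ : Perm (Fin 3), single (γ 0) (γ 1) (1 : ℂ) ⊗ₖ single (γ 1) (γ 2) (1 : ℂ))
      (b, a) (d, c) := by
    simp only [Matrix.sum_apply]
    exact Finset.sum_congr rfl fun γ _ => kronecker_apply_comm _ _ _ _ _ _
  rw [flipP_mul_apply, RD3deriv_apply, Matrix.sub_apply, hswap,
    sum_perm_single_kronecker_single_apply, sum_perm_single_kronecker_single_apply]
end
end
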